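/- Let m-1 \leq \alpha < m and f \in C^m[0,1]. Then the right Caputo fractional derivatives of the Bernstein polynomials of f converge uniformly on [0,1] to the right Caputo fractional derivative of f: \sup_{x\in[0,1]} |{}^C_xD_1^\alpha B_n(f;x) - {}^C_xD_1^\alpha f(x)| \to 0 as n \to \infty. -/

import Mathlib

/-! The `m`-th derivative of the Bernstein polynomial `B_{N+m} f` is the falling factorial
`(N+m)^{(m)}` times the Bernstein combination of degree `N` of the `m`-th forward differences
of `f` with step `h = 1/(N+m)`. By the mean value theorem each such difference is
`h^m f^{(m)}(ξ_k)` with `ξ_k` within `m h` of `k/N`, and `(N+m)^{(m)} h^m → 1`; uniform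
continuity of `f^{(m)}` and Bernstein's theorem then give `(B_n f)^{(m)} → f^{(m)}` uniformly
on `[0,1]`. The right Caputo derivative of order `α` is `f^{(m)}` integrated against a kernel
of total mass at most `1/Γ(m-α+1)`, so it preserves uniform convergence of `m`-th
derivatives. -/

/-- The `n`-th Bernstein polynomial of `f`. -/
noncomputable def bern (n : ℕ) (f : ℝ → ℝ) (x : ℝ) : ℝ :=
  ∑ i ∈ Finset.range (n + 1),
    (n.choose i : ℝ) * f ((i : ℝ) / n) * x ^ i * (1 - x) ^ (n - i)

/-- The right Caputo fractional derivative of order `α` (with `m - 1 ≤ α < m`)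
based at `1` (derivatives taken within `[0,1]`). -/
noncomputable def caputoRight (m : ℕ) (α : ℝ) (f : ℝ → ℝ) (x : ℝ) : ℝ :=
  ((-1 : ℝ) ^ m / Real.Gamma ((m : ℝ) - α)) *
    ∫ τ in x..(1 : ℝ), (τ - x) ^ ((m : ℝ) - α - 1) * iteratedDerivWithin m f (Set.Icc 0 1) τ

open Finset hiding Icc
open Set Filter Polynomial MeasureTheory
open scoped Topology unitInterval fwdDiff

section BernsteinComb

variable {R : Type*} [CommRing R]

noncomputable def bernsteinComb (n : ℕ) : (ℕ → R) →ₗ[R] R[X] :=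
  ∑ k ∈ range (n + 1), (LinearMap.proj k).smulRight (bernsteinPolynomial R n k)

lemma bernsteinComb_apply (n : ℕ) (g : ℕ → R) :
    bernsteinComb n g = ∑ k ∈ range (n + 1), g k • bernsteinPolynomial R n k := by
  simp [bernsteinComb]

lemma bernsteinComb_congr {n : ℕ} {g g' : ℕ → R} (h : ∀ k ≤ n, g k = g' k) :
    bernsteinComb n g = bernsteinComb n g' := by
  simp only [bernsteinComb_apply]
  exact sum_congr rfl fun k hk => by rw [h k (Nat.lt_succ_iff.mp (mem_range.mp hk))]

lemma bernsteinComb_eq_add_sum_succ (n : ℕ) (g : ℕ → R) :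
    bernsteinComb n g = g 0 • bernsteinPolynomial R n 0 +
      ∑ k ∈ range (n + 1), g (k + 1) • bernsteinPolynomial R n (k + 1) := by
  have htop : g (n + 1) • bernsteinPolynomial R n (n + 1) = 0 := by
    rw [bernsteinPolynomial.eq_zero_of_lt R n.lt_succ_self, smul_zero]
  rw [bernsteinComb_apply, ← add_zero (∑ k ∈ range (n + 1), _), ← htop, ← sum_range_succ,
    sum_range_succ', add_comm]

/-- Summation by parts against `b'_{n+1,k+1} = (n+1) (b_{n,k} - b_{n,k+1})`. -/
lemma derivative_bernsteinComb (n : ℕ) (g : ℕ → R) :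
    derivative (bernsteinComb (n + 1) g) = ((n + 1 : ℕ) : R[X]) * bernsteinComb n (Δ_[1] g) := by
  have hΔ : bernsteinComb n (Δ_[1] g) =
      ∑ k ∈ range (n + 1), g (k + 1) • bernsteinPolynomial R n k - bernsteinComb n g := by
    simp only [bernsteinComb_apply, fwdDiff, sub_smul, sum_sub_distrib]
  rw [hΔ, bernsteinComb_eq_add_sum_succ n g, bernsteinComb_apply, sum_range_succ', map_add,
    derivative_sum]
  simp only [derivative_smul, bernsteinPolynomial.derivative_succ_aux,
    bernsteinPolynomial.derivative_zero, add_tsub_cancel_right, smul_sub, mul_sub, sum_sub_distrib]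
  simp only [← mul_smul_comm, ← mul_sum]
  push_cast
  ring

lemma iterate_derivative_bernsteinComb (m n : ℕ) (g : ℕ → R) :
    derivative^[m] (bernsteinComb (n + m) g) =
      ((n + m).descFactorial m : R[X]) * bernsteinComb n ((Δ_[1])^[m] g) := by
  induction m generalizing g with
  | zero => simp
  | succ m ih =>
    rw [Function.iterate_succ_apply, ← add_assoc, derivative_bernsteinComb,
      iterate_derivative_natCast_mul, ih, Nat.succ_descFactorial_succ, Function.iterate_succ_apply]
    push_cast
    ring

end BernsteinComb

lemma eval_bernsteinComb (n : ℕ) (g : ℕ → ℝ) (x : ℝ) :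
    (bernsteinComb n g).eval x = ∑ k ∈ range (n + 1), g k * (bernsteinPolynomial ℝ n k).eval x := by
  simp [bernsteinComb_apply, eval_finsetSum]

lemma abs_eval_bernsteinComb_le {n : ℕ} {g : ℕ → ℝ} {c : ℝ} (hg : ∀ k ≤ n, |g k| ≤ c) {x : ℝ}
    (hx : x ∈ Icc (0 : ℝ) 1) : |(bernsteinComb n g).eval x| ≤ c := by
  have hnonneg : ∀ k, 0 ≤ (bernsteinPolynomial ℝ n k).eval x := fun k =>
    bernstein_nonneg (x := ⟨x, hx⟩)
  have hsum : ∑ k ∈ range (n + 1), (bernsteinPolynomial ℝ n k).eval x = 1 := by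
    simpa [eval_finsetSum] using congrArg (eval x) (bernsteinPolynomial.sum ℝ n)
  calc |(bernsteinComb n g).eval x|
      ≤ ∑ k ∈ range (n + 1), |g k| * (bernsteinPolynomial ℝ n k).eval x := by
        rw [eval_bernsteinComb]
        refine (abs_sum_le_sum_abs _ _).trans_eq (sum_congr rfl fun k _ => ?_)
        rw [abs_mul, abs_of_nonneg (hnonneg k)]
    _ ≤ ∑ k ∈ range (n + 1), c * (bernsteinPolynomial ℝ n k).eval x :=
        sum_le_sum fun k hk =>
          mul_le_mul_of_nonneg_right (hg k (Nat.lt_succ_iff.mp (mem_range.mp hk))) (hnonneg k)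
    _ = c := by rw [← mul_sum, hsum, mul_one]

lemma bern_eq_eval_bernsteinComb (n : ℕ) (f : ℝ → ℝ) (x : ℝ) :
    bern n f x = (bernsteinComb n fun k => f (k / n)).eval x := by
  rw [eval_bernsteinComb, bern]
  refine sum_congr rfl fun k _ => ?_
  simp only [bernsteinPolynomial, eval_mul, eval_pow, eval_sub, eval_one, eval_X, eval_natCast]
  ring

lemma contDiff_bern (n : ℕ) (f : ℝ → ℝ) {k : WithTop ℕ∞} : ContDiff ℝ k (bern n f) := by
  unfold bern
  fun_prop

lemma iteratedDerivWithin_eval {𝕜 : Type*} [NontriviallyNormedField 𝕜] {s : Set 𝕜}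
    (hs : UniqueDiffOn 𝕜 s) (p : 𝕜[X]) (m : ℕ) :
    EqOn (iteratedDerivWithin m (fun x => p.eval x) s) (fun x => (derivative^[m] p).eval x) s := by
  induction m generalizing p with
  | zero => simp [EqOn]
  | succ m ih =>
    intro x hx
    rw [iteratedDerivWithin_succ',
      iteratedDerivWithin_congr (fun y hy => p.derivWithin (hs y hy)) hx, ih _ hx,
      Function.iterate_succ_apply]

lemma iteratedDerivWithin_bern_add (m N : ℕ) (f : ℝ → ℝ) {x : ℝ} (hx : x ∈ Icc (0 : ℝ) 1) :
    iteratedDerivWithin m (bern (N + m) f) (Icc 0 1) x =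
      (N + m).descFactorial m *
        (bernsteinComb N ((Δ_[1])^[m] fun k => f (k / (N + m : ℕ)))).eval x := by
  rw [funext (bern_eq_eval_bernsteinComb (N + m) f),
    iteratedDerivWithin_eval (uniqueDiffOn_Icc zero_lt_one) _ m hx,
    iterate_derivative_bernsteinComb]
  simp only [eval_mul, eval_natCast]

lemma tendstoUniformlyOn_bern {G : ℝ → ℝ} (hG : ContinuousOn G (Icc 0 1)) :
    TendstoUniformlyOn (fun n => bern n G) G atTop (Icc 0 1) := by
  let Gᵢ : C(I, ℝ) := ⟨(Icc 0 1).domRestrict G, hG.domRestrict⟩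
  have happrox : ∀ n (x : I), bernsteinApproximation n Gᵢ x = bern n G x := fun n x => by
    rw [bernsteinApproximation.apply, bern, ← Fin.sum_univ_eq_sum_range]
    refine Fintype.sum_congr _ _ fun k => ?_
    have hnode : Gᵢ (bernstein.z k) = G (k / n) := rfl
    rw [bernstein_apply, smul_eq_mul, hnode]
    ring
  rw [tendstoUniformlyOn_iff_tendstoUniformly_comp_coe]
  have := ContinuousMap.tendsto_iff_tendstoUniformly.mp (bernsteinApproximation_uniform Gᵢ)
  simp only [funext₂ happrox] at this
  exact this

section FwdDiff

variable {𝕜 E : Type*} [NontriviallyNormedField 𝕜] [NormedAddCommGroup E]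

lemma hasDerivAt_fwdDiff_iter [NormedSpace 𝕜 E] {F F' : 𝕜 → E} {h y : 𝕜} (m : ℕ)
    (hF : ∀ j ≤ m, HasDerivAt F (F' (y + j • h)) (y + j • h)) :
    HasDerivAt ((Δ_[h])^[m] F) ((Δ_[h])^[m] F' y) y := by
  simp only [_root_.funext (fwdDiff_iter_eq_sum_shift h _ m)]
  refine HasDerivAt.fun_sum fun j hj => ((hF j ?_).comp_add_const y _).fun_const_smul _
  exact Nat.lt_succ_iff.mp (mem_range.mp hj)

lemma continuousOn_fwdDiff_iter {F : 𝕜 → E} {s t : Set 𝕜} {h : 𝕜} (m : ℕ) (hF : ContinuousOn F s)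
    (hst : ∀ y ∈ t, ∀ j ≤ m, y + j • h ∈ s) : ContinuousOn ((Δ_[h])^[m] F) t := by
  simp only [_root_.funext (fwdDiff_iter_eq_sum_shift h _ m)]
  refine continuousOn_finsetSum _ fun j hj =>
    (hF.comp (by fun_prop) fun y hy => hst y hy j ?_).fun_const_smul _
  exact Nat.lt_succ_iff.mp (mem_range.mp hj)

end FwdDiff

lemma fwdDiff_iter_comp_natCast_mul {G : Type*} [AddCommGroup G] (F : ℝ → G) (h : ℝ) (m k : ℕ) :
    (Δ_[1])^[m] (fun j : ℕ => F (j * h)) k = (Δ_[h])^[m] F (k * h) := by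
  simp [fwdDiff_iter_eq_sum_shift, add_mul]

/-- Induction on `m`: the mean value theorem for `Δ_[h]^[m] F` on `[a, a + h]` gives
`Δ_[h]^[m+1] F a = h * Δ_[h]^[m] F' η`, and the induction hypothesis applies to `F'`. -/
lemma exists_fwdDiff_iter_eq_pow_mul_iteratedDerivWithin {F : ℝ → ℝ} {l r a h : ℝ} (m : ℕ)
    (hF : ContDiffOn ℝ m F (Icc l r)) (hh : 0 < h) (hla : l ≤ a) (har : a + m * h ≤ r) :
    ∃ ξ ∈ Icc a (a + m * h), (Δ_[h])^[m] F a = h ^ m * iteratedDerivWithin m F (Icc l r) ξ := by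
  induction m generalizing F a with
  | zero => exact ⟨a, by simp, by simp⟩
  | succ m ih =>
    push_cast at har ⊢
    have hmh : 0 ≤ (m : ℝ) * h := by positivity
    have hs : UniqueDiffOn ℝ (Icc l r) := uniqueDiffOn_Icc (by linarith)
    set F' := derivWithin F (Icc l r)
    have hF' : ContDiffOn ℝ m F' (Icc l r) := hF.derivWithin hs (by norm_cast)
    have hderiv : ∀ y ∈ Ioo l r, HasDerivAt F (F' y) y := fun y hy =>
      ((hF.differentiableOn (by simp)) y (Ioo_subset_Icc_self hy)).hasDerivWithinAt.hasDerivAt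
        (Icc_mem_nhds hy.1 hy.2)
    have hshift : ∀ (y : ℝ) j, j ≤ m → y ≤ y + j • h ∧ y + j • h ≤ y + m * h := by
      intro y j hj
      have : (j : ℝ) ≤ m := by exact_mod_cast hj
      rw [nsmul_eq_mul]
      constructor <;> nlinarith
    obtain ⟨η, hη, hslope⟩ := exists_hasDerivAt_eq_slope ((Δ_[h])^[m] F) ((Δ_[h])^[m] F')
      (by linarith : a < a + h)
      (continuousOn_fwdDiff_iter m hF.continuousOn fun y hy j hj => by
        have := hshift y j hj; constructor <;> linarith [hy.1, hy.2])
      (fun y hy => hasDerivAt_fwdDiff_iter m fun j hj => hderiv _ (by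
        have := hshift y j hj; constructor <;> linarith [hy.1, hy.2]))
    obtain ⟨ξ, hξ, hξeq⟩ := ih hF' (a := η) (by linarith [hη.1]) (by linarith [hη.2])
    refine ⟨ξ, ⟨hη.1.le.trans hξ.1, by linarith [hξ.2, hη.2]⟩, ?_⟩
    have hstep : (Δ_[h])^[m + 1] F a = h * (Δ_[h])^[m] F' η := by
      rw [Function.iterate_succ_apply', fwdDiff, hslope, add_sub_cancel_left]
      field_simp
    rw [hstep, hξeq, iteratedDerivWithin_succ']
    ring

lemma tendsto_descFactorial_div_pow (m : ℕ) :
    Tendsto (fun n : ℕ => (n.descFactorial m : ℝ) / (n : ℝ) ^ m) atTop (𝓝 1) := by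
  have hprod : Tendsto (fun n : ℕ => ∏ i ∈ range m, (1 - (i : ℝ) / n)) atTop (𝓝 1) := by
    simpa using tendsto_finsetProd (range m) fun i _ =>
      (tendsto_const_div_atTop_nhds_zero_nat (i : ℝ)).const_sub 1
  refine hprod.congr' ?_
  filter_upwards [eventually_ge_atTop m, eventually_gt_atTop 0] with n hmn hn
  have hn' : (n : ℝ) ≠ 0 := by positivity
  rw [Nat.descFactorial_eq_prod_range, Nat.cast_prod, pow_eq_prod_const, ← prod_div_distrib]
  refine prod_congr rfl fun i hi => ?_
  rw [Nat.cast_sub (by linarith [mem_range.mp hi]), sub_div, div_self hn']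

lemma tendstoUniformlyOn_mul_eval_bernsteinComb {G : ℝ → ℝ} (hG : ContinuousOn G (Icc 0 1))
    {d : ℕ → ℝ} (hd : Tendsto d atTop (𝓝 1)) {t : ℕ → ℕ → ℝ} {δ : ℕ → ℝ}
    (hδ : Tendsto δ atTop (𝓝 0)) (ht : ∀ᶠ n in atTop, ∀ k ≤ n, t n k ∈ Icc 0 1)
    (htδ : ∀ᶠ n in atTop, ∀ k ≤ n, |t n k - k / n| ≤ δ n) :
    TendstoUniformlyOn (fun n x => d n * (bernsteinComb n fun k => G (t n k)).eval x) G atTop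
      (Icc 0 1) := by
  rw [Metric.tendstoUniformlyOn_iff]
  intro ε hε
  obtain ⟨M, hM⟩ := isCompact_Icc.exists_bound_of_continuousOn hG
  obtain ⟨η, hη, hGη⟩ := Metric.uniformContinuousOn_iff.mp
    (isCompact_Icc.uniformContinuousOn_of_continuous hG) (ε / 3) (by positivity)
  have hdM : Tendsto (fun n => (d n - 1) * M) atTop (𝓝 0) := by
    simpa using (hd.sub_const 1).mul_const M
  filter_upwards [ht, htδ, hδ.eventually (gt_mem_nhds hη),
    Metric.tendsto_nhds.mp hdM (ε / 3) (by positivity),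
    Metric.tendstoUniformlyOn_iff.mp (tendstoUniformlyOn_bern hG) (ε / 3) (by positivity)]
    with n htn htδn hδn hdn hbern x hx
  set P := (bernsteinComb n fun k => G (t n k)).eval x
  have hnodes : |bern n G x - P| ≤ ε / 3 := by
    rw [bern_eq_eval_bernsteinComb, ← eval_sub, ← map_sub]
    refine abs_eval_bernsteinComb_le (fun k hk => (hGη _ ?_ _ (htn k hk) ?_).le) hx
    · exact ⟨by positivity, div_le_one_of_le₀ (by exact_mod_cast hk) (by positivity)⟩
    · rw [Real.dist_eq, abs_sub_comm]
      exact (htδn k hk).trans_lt hδn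
  have hscale : |P - d n * P| < ε / 3 := by
    have hP : |P| ≤ M := abs_eval_bernsteinComb_le (fun k hk => hM _ (htn k hk)) hx
    rw [Real.dist_eq, sub_zero] at hdn
    calc |P - d n * P| = |d n - 1| * |P| := by rw [← abs_mul, abs_sub_comm]; ring_nf
      _ ≤ |(d n - 1) * M| := by
        rw [abs_mul]; exact mul_le_mul_of_nonneg_left (hP.trans (le_abs_self M)) (abs_nonneg _)
      _ < ε / 3 := hdn
  have hbernx := hbern x hx
  rw [Real.dist_eq] at hbernx ⊢
  calc |G x - d n * P| ≤ |G x - bern n G x| + |bern n G x - d n * P| := abs_sub_le _ _ _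
    _ ≤ |G x - bern n G x| + (|bern n G x - P| + |P - d n * P|) := by
        gcongr; exact abs_sub_le _ _ _
    _ < ε := by linarith

lemma exists_mem_Icc_fwdDiff_iter_eq {m N k : ℕ} {f : ℝ → ℝ} (hf : ContDiffOn ℝ m f (Icc 0 1))
    (hN : 1 ≤ N) (hk : k ≤ N) :
    ∃ ξ ∈ Icc ((k : ℝ) / (N + m : ℕ)) ((k + m) / (N + m : ℕ)),
      (Δ_[1])^[m] (fun j : ℕ => f (j / (N + m : ℕ))) k =
        ((N + m : ℕ) : ℝ)⁻¹ ^ m * iteratedDerivWithin m f (Icc 0 1) ξ := by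
  have hn : (0 : ℝ) < (N + m : ℕ) := by positivity
  obtain ⟨ξ, hξ, heq⟩ := exists_fwdDiff_iter_eq_pow_mul_iteratedDerivWithin m hf (inv_pos.mpr hn)
    (a := k * ((N + m : ℕ) : ℝ)⁻¹) (by positivity) (by
      rw [← add_mul, ← div_eq_mul_inv, div_le_one hn]
      exact_mod_cast (by omega : k + m ≤ N + m))
  refine ⟨ξ, by simpa only [add_div, div_eq_mul_inv, add_mul] using hξ, ?_⟩
  simpa only [div_eq_mul_inv, fwdDiff_iter_comp_natCast_mul] using heq

lemma div_mem_Icc_div_add {k N : ℕ} (m : ℕ) (hN : 1 ≤ N) (hk : k ≤ N) :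
    (k : ℝ) / N ∈ Icc ((k : ℝ) / (N + m : ℕ)) ((k + m) / (N + m : ℕ)) := by
  have hkN : (k : ℝ) ≤ N := by exact_mod_cast hk
  have hN' : (0 : ℝ) < N := by exact_mod_cast hN
  push_cast
  constructor
  · exact div_le_div_of_nonneg_left (by positivity) hN'
      (by linarith [(m.cast_nonneg : (0 : ℝ) ≤ m)])
  · rw [div_le_div_iff₀ hN' (by positivity)]
    nlinarith [(m.cast_nonneg : (0 : ℝ) ≤ m)]

lemma iteratedDerivWithin_bern_add_eqOn {m N : ℕ} {f : ℝ → ℝ} {c : ℕ → ℝ}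
    (hc : ∀ k ≤ N,
      (Δ_[1])^[m] (fun j : ℕ => f (j / (N + m : ℕ))) k = ((N + m : ℕ) : ℝ)⁻¹ ^ m * c k) :
    EqOn (iteratedDerivWithin m (bern (N + m) f) (Icc 0 1))
      (fun x => (N + m).descFactorial m / ((N + m : ℕ) : ℝ) ^ m * (bernsteinComb N c).eval x)
      (Icc 0 1) := by
  intro x hx
  rw [iteratedDerivWithin_bern_add m N f hx, bernsteinComb_congr hc,
    show (fun k => ((N + m : ℕ) : ℝ)⁻¹ ^ m * c k) = ((N + m : ℕ) : ℝ)⁻¹ ^ m • c from rfl,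
    map_smul, eval_smul, smul_eq_mul, div_eq_mul_inv, inv_pow]
  ring

theorem tendstoUniformlyOn_iteratedDerivWithin_bern {m : ℕ} {f : ℝ → ℝ}
    (hf : ContDiffOn ℝ m f (Icc 0 1)) :
    TendstoUniformlyOn (fun n => iteratedDerivWithin m (bern n f) (Icc 0 1))
      (iteratedDerivWithin m f (Icc 0 1)) atTop (Icc 0 1) := by
  have hnodes : ∀ N k : ℕ, ∃ ξ, 1 ≤ N → k ≤ N →
      ξ ∈ Icc ((k : ℝ) / (N + m : ℕ)) ((k + m) / (N + m : ℕ)) ∧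
      (Δ_[1])^[m] (fun j : ℕ => f (j / (N + m : ℕ))) k =
        ((N + m : ℕ) : ℝ)⁻¹ ^ m * iteratedDerivWithin m f (Icc 0 1) ξ := by
    intro N k
    by_cases hNk : 1 ≤ N ∧ k ≤ N
    · obtain ⟨ξ, hξ⟩ := exists_mem_Icc_fwdDiff_iter_eq hf hNk.1 hNk.2
      exact ⟨ξ, fun _ _ => hξ⟩
    · exact ⟨0, fun hN hk => absurd ⟨hN, hk⟩ hNk⟩
  choose ξ hξ using hnodes
  have hlim := tendstoUniformlyOn_mul_eval_bernsteinComb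
    (hf.continuousOn_iteratedDerivWithin le_rfl (uniqueDiffOn_Icc zero_lt_one))
    ((tendsto_descFactorial_div_pow m).comp (tendsto_add_atTop_nat m))
    (δ := fun N => m / (N + m : ℕ))
    ((tendsto_const_div_atTop_nhds_zero_nat _).comp (tendsto_add_atTop_nat m)) (t := ξ) ?_ ?_
  · refine (hlim.seq_tendstoUniformlyOn (· - m) (tendsto_sub_atTop_nat m)).congr ?_
    filter_upwards [eventually_ge_atTop (m + 1)] with n hn
    obtain ⟨N, rfl⟩ : ∃ N, n = N + m := ⟨n - m, by omega⟩
    simpa using (iteratedDerivWithin_bern_add_eqOn fun k hk => (hξ N k (by omega) hk).2).symm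
  · filter_upwards [eventually_ge_atTop 1] with N hN k hk
    refine Icc_subset_Icc (by positivity) ?_ (hξ N k hN hk).1
    rw [div_le_one (by positivity)]
    exact_mod_cast (by omega : k + m ≤ N + m)
  · filter_upwards [eventually_ge_atTop 1] with N hN k hk
    have := Real.dist_le_of_mem_Icc (hξ N k hN hk).1 (div_mem_Icc_div_add m hN hk)
    rwa [Real.dist_eq, ← sub_div, add_sub_cancel_left] at this

lemma intervalIntegrable_sub_rpow {β : ℝ} (hβ : -1 < β) (a b : ℝ) :
    IntervalIntegrable (fun τ => (τ - a) ^ β) volume a b := by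
  simpa using (intervalIntegral.intervalIntegrable_rpow' hβ (a := 0) (b := b - a)).comp_sub_right a

lemma integral_sub_rpow {β : ℝ} (hβ : -1 < β) (a b : ℝ) :
    ∫ τ in a..b, (τ - a) ^ β = (b - a) ^ (β + 1) / (β + 1) := by
  rw [intervalIntegral.integral_comp_sub_right (fun τ => τ ^ β), sub_self, integral_rpow (.inl hβ),
    Real.zero_rpow (by linarith), sub_zero]

lemma abs_integral_sub_rpow_mul_le {β a b C : ℝ} (hβ : -1 < β) (hab : a ≤ b) {w : ℝ → ℝ}
    (hw : ∀ τ ∈ Ioc a b, |w τ| ≤ C) :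
    |∫ τ in a..b, (τ - a) ^ β * w τ| ≤ C * (b - a) ^ (β + 1) / (β + 1) := by
  have hbound : ∀ τ ∈ Ioc a b, ‖(τ - a) ^ β * w τ‖ ≤ C * (τ - a) ^ β := fun τ hτ => by
    have hker : 0 ≤ (τ - a) ^ β := Real.rpow_nonneg (by linarith [hτ.1]) β
    rw [Real.norm_eq_abs, abs_mul, abs_of_nonneg hker, mul_comm]
    exact mul_le_mul_of_nonneg_right (hw τ hτ) hker
  calc |∫ τ in a..b, (τ - a) ^ β * w τ|
      ≤ ∫ τ in a..b, C * (τ - a) ^ β :=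
        intervalIntegral.norm_integral_le_of_norm_le hab (ae_of_all _ hbound)
          ((intervalIntegrable_sub_rpow hβ a b).const_mul C)
    _ = C * (b - a) ^ (β + 1) / (β + 1) := by
        rw [intervalIntegral.integral_const_mul, integral_sub_rpow hβ, mul_div_assoc]

lemma abs_caputoRight_sub_le {m : ℕ} {α C x : ℝ} {f g : ℝ → ℝ} (hα : α < m)
    (hf : ContinuousOn (iteratedDerivWithin m f (Icc 0 1)) (Icc 0 1))
    (hg : ContinuousOn (iteratedDerivWithin m g (Icc 0 1)) (Icc 0 1))
    (hfg : ∀ τ ∈ Icc (0 : ℝ) 1,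
      |iteratedDerivWithin m f (Icc 0 1) τ - iteratedDerivWithin m g (Icc 0 1) τ| ≤ C)
    (hx : x ∈ Icc (0 : ℝ) 1) :
    |caputoRight m α f x - caputoRight m α g x| ≤ C / Real.Gamma (m - α + 1) := by
  have hβ : -1 < (m : ℝ) - α - 1 := by linarith
  have hΓ : 0 < Real.Gamma (m - α) := Real.Gamma_pos_of_pos (by linarith)
  have hC : 0 ≤ C := (abs_nonneg _).trans (hfg 1 (by simp))
  have hsub : uIcc x 1 ⊆ Icc 0 1 := by rw [uIcc_of_le hx.2]; exact Icc_subset_Icc_left hx.1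
  have hint : ∀ {u : ℝ → ℝ}, ContinuousOn u (Icc 0 1) →
      IntervalIntegrable (fun τ => (τ - x) ^ ((m : ℝ) - α - 1) * u τ) volume x 1 := fun hu =>
    (intervalIntegrable_sub_rpow hβ x 1).mul_continuousOn (hu.mono hsub)
  have hI := abs_integral_sub_rpow_mul_le hβ hx.2 fun τ hτ => hfg τ ⟨hx.1.trans hτ.1.le, hτ.2⟩
  rw [caputoRight, caputoRight, ← mul_sub, ← intervalIntegral.integral_sub (hint hf) (hint hg),
    abs_mul, abs_div, abs_pow, abs_neg, abs_one, one_pow, abs_of_pos hΓ,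
    Real.Gamma_add_one (by linarith)]
  simp only [← mul_sub]
  calc 1 / Real.Gamma (m - α) * |∫ τ in x..1, (τ - x) ^ ((m : ℝ) - α - 1) *
        (iteratedDerivWithin m f (Icc 0 1) τ - iteratedDerivWithin m g (Icc 0 1) τ)|
      ≤ 1 / Real.Gamma (m - α) * (C * (1 - x) ^ ((m : ℝ) - α) / (m - α)) := by
        gcongr
        simpa using hI
    _ ≤ 1 / Real.Gamma (m - α) * (C * 1 / (m - α)) := by
        gcongr
        exact Real.rpow_le_one (by linarith [hx.2]) (by linarith [hx.1]) (by linarith)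
    _ = C / ((m - α) * Real.Gamma (m - α)) := by field_simp

theorem tendstoUniformlyOn_caputoRight {ι : Type*} {p : Filter ι} {m : ℕ} {α : ℝ} (hα : α < m)
    {F : ι → ℝ → ℝ} {f : ℝ → ℝ}
    (hF : ∀ i, ContinuousOn (iteratedDerivWithin m (F i) (Icc 0 1)) (Icc 0 1))
    (hf : ContinuousOn (iteratedDerivWithin m f (Icc 0 1)) (Icc 0 1))
    (h : TendstoUniformlyOn (fun i => iteratedDerivWithin m (F i) (Icc 0 1))
      (iteratedDerivWithin m f (Icc 0 1)) p (Icc 0 1)) :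
    TendstoUniformlyOn (fun i x => caputoRight m α (F i) x) (fun x => caputoRight m α f x) p
      (Icc 0 1) := by
  have hΓ : 0 < Real.Gamma (m - α + 1) := Real.Gamma_pos_of_pos (by linarith)
  rw [Metric.tendstoUniformlyOn_iff] at h ⊢
  intro ε hε
  filter_upwards [h (ε / 2 * Real.Gamma (m - α + 1)) (by positivity)] with i hi x hx
  rw [Real.dist_eq]
  calc |caputoRight m α f x - caputoRight m α (F i) x|
      ≤ ε / 2 * Real.Gamma (m - α + 1) / Real.Gamma (m - α + 1) :=
        abs_caputoRight_sub_le hα hf (hF i) (fun τ hτ => (hi τ hτ).le) hx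
    _ < ε := by rw [mul_div_cancel_right₀ _ hΓ.ne']; linarith

theorem caputoRight_bernstein_uniform_convergence_general (m : ℕ) (α : ℝ)
    (hα₂ : α < m)
    (f : ℝ → ℝ) (hf : ContDiffOn ℝ m f (Set.Icc 0 1)) :
    TendstoUniformlyOn (fun n x => caputoRight m α (bern n f) x)
      (fun x => caputoRight m α f x) Filter.atTop (Set.Icc 0 1) :=
  tendstoUniformlyOn_caputoRight hα₂
    (fun n => (contDiff_bern n f).contDiffOn.continuousOn_iteratedDerivWithin le_rfl
      (uniqueDiffOn_Icc zero_lt_one))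
    (hf.continuousOn_iteratedDerivWithin le_rfl (uniqueDiffOn_Icc zero_lt_one))
    (tendstoUniformlyOn_iteratedDerivWithin_bern hf)

/-- For `f ∈ Cᵐ[0,1]` and `m - 1 ≤ α < m`, the right Caputo fractional derivatives
of the Bernstein polynomials of `f` converge uniformly on `[0,1]` to the right
Caputo fractional derivative of `f`. -/
theorem caputoRight_bernstein_uniform_convergence (m : ℕ) (hm : 1 ≤ m) (α : ℝ)
    (hα₁ : (m : ℝ) - 1 ≤ α) (hα₂ : α < m)
    (f : ℝ → ℝ) (hf : ContDiffOn ℝ m f (Set.Icc 0 1)) :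
    TendstoUniformlyOn (fun n x => caputoRight m α (bern n f) x)
      (fun x => caputoRight m α f x) Filter.atTop (Set.Icc 0 1) :=
  caputoRight_bernstein_uniform_convergence_general m α hα₂ f hf
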